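/- arXiv:2104.08424 — 7 statements merged into one kernel-verified Lean document; each statement's English description precedes it below -/
import Mathlib

section
/- Let H be the n×n Hermitian matrix (n ≥ 3) defined by: H_{k,k+1} = e^{iη} and H_{k+1,k} = e^{-iη} for 1 ≤ k ≤ j, H_{k,k+1} = H_{k+1,k} = 1 for j+1 ≤ k ≤ n-1, H_{n,1} = H_{1,n} = 1 (indices mod n for the wrap-around arc, with the wrap-around entry being part of the undirected portion), and all other entries 0. Then det(H) = (-1)^{n+1}·2cos(ηj) + (-1)^{⌊n/2⌋}·(1+(-1)^n). -/
/-!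
Expand the determinant over permutations. Only permutations sending every vertex to a
neighbour on the cycle contribute, and for such a permutation `σ`, `σ i = i + 1` holds iff
`σ (i + 2) = i + 3`. Hence `σ` is a rotation, contributing `(-1)^(n+1)` times the product of
the weights around the cycle in one direction (`e^{± i j η}`), or a fixed-point-free involution
alternating between the two directions. Such involutions are the two perfect matchings of the
cycle when `n` is even and do not exist when `n` is odd; each contributes `(-1)^(n/2)`, because
the two weights of an edge multiply to `1`.
-/

open Complex Equiv Finset Fin.CommRing

theorem Equiv.Perm.apply_apply_of_sq_eq_one {α : Type*} {σ : Perm α} (h : σ ^ 2 = 1) (x : α) :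
    σ (σ x) = x := by
  rw [← Perm.mul_apply, ← sq, h, Perm.one_apply]

namespace MixedCycle

variable {n : ℕ} [NeZero n]

theorem forall_of_zero_of_add_one {P : Fin n → Prop} (h0 : P 0)
    (hsucc : ∀ i, P i → P (i + 1)) (i : Fin n) : P i := by
  have hnat : ∀ k : ℕ, P k := fun k => by
    induction k with
    | zero => simpa using h0
    | succ k ih => simpa using hsucc _ ih
  simpa using hnat i

theorem two_ne_zero_of_three_le (hn : 3 ≤ n) : (2 : Fin n) ≠ 0 := by
  rw [Ne, Fin.ext_iff, Fin.coe_ofNat_eq_mod, Fin.val_zero, Nat.mod_eq_of_lt (by omega)]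
  omega

theorem sub_one_ne_add_one (hn : 3 ≤ n) (i : Fin n) : i - 1 ≠ i + 1 := fun h =>
  two_ne_zero_of_three_le hn (by linear_combination -h)

def IsCycleStep (σ : Perm (Fin n)) : Prop := ∀ i, σ i = i + 1 ∨ σ i = i - 1

instance : DecidablePred (IsCycleStep (n := n)) := fun σ => by
  unfold IsCycleStep; infer_instance

theorem isCycleStep_addRight_one : IsCycleStep (Equiv.addRight (1 : Fin n)) := fun _ => Or.inl rfl

theorem isCycleStep_inv_addRight_one : IsCycleStep (Equiv.addRight (1 : Fin n))⁻¹ := fun i =>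
  Or.inr (by simp [Perm.inv_def, sub_eq_add_neg])

namespace IsCycleStep

variable {σ τ : Perm (Fin n)}

theorem apply_ne (hn : 3 ≤ n) (hσ : IsCycleStep σ) (i : Fin n) : σ i ≠ i := by
  have h2 := two_ne_zero_of_three_le hn
  rcases hσ i with h | h <;> rw [h] <;> intro hfix
  · exact h2 (by linear_combination 2 * hfix)
  · exact h2 (by linear_combination -2 * hfix)

theorem apply_add_two_iff (hn : 3 ≤ n) (hσ : IsCycleStep σ) (i : Fin n) :
    σ (i + 2) = i + 2 + 1 ↔ σ i = i + 1 := by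
  have h2 := two_ne_zero_of_three_le hn
  constructor
  · intro h
    refine (hσ i).resolve_right fun hi => ?_
    -- the preimage of `i + 1` would have to be `i` or `i + 2`
    obtain ⟨b, hb⟩ := σ.surjective (i + 1)
    rcases hσ b with hb' | hb'
    · obtain rfl : b = i := by linear_combination hb'.symm.trans hb
      exact h2 (by linear_combination hb.symm.trans hi)
    · obtain rfl : b = i + 2 := by linear_combination hb'.symm.trans hb
      exact h2 (by linear_combination h.symm.trans hb)
  · intro h
    refine (hσ (i + 2)).resolve_right fun hi => h2 ?_
    linear_combination σ.injective (hi.trans (h.trans (by ring)).symm)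

theorem apply_add_two_mul_iff (hn : 3 ≤ n) (hσ : IsCycleStep σ) (i : Fin n) (k : ℕ) :
    σ (i + 2 * k) = i + 2 * k + 1 ↔ σ i = i + 1 := by
  induction k with
  | zero => simp
  | succ k ih =>
    have hk : i + 2 * ((k + 1 : ℕ) : Fin n) = i + 2 * k + 2 := by push_cast; ring
    rw [hk, hσ.apply_add_two_iff hn, ih]

theorem apply_eq_apply_of_iff (hn : 3 ≤ n) (hσ : IsCycleStep σ) (hτ : IsCycleStep τ)
    {i : Fin n} (h : σ i = i + 1 ↔ τ i = i + 1) : σ i = τ i := by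
  rcases hσ i with hσi | hσi <;> rcases hτ i with hτi | hτi
  · rw [hσi, hτi]
  · exact absurd (h.mp hσi) (hτi ▸ sub_one_ne_add_one hn i)
  · exact absurd (h.mpr hτi) (hσi ▸ sub_one_ne_add_one hn i)
  · rw [hσi, hτi]

theorem ext_of_iff (hn : 3 ≤ n) (hσ : IsCycleStep σ) (hτ : IsCycleStep τ)
    (h0 : σ 0 = 1 ↔ τ 0 = 1) (h1 : σ 1 = 2 ↔ τ 1 = 2) : σ = τ := by
  have hdir : ∀ i, (σ i = i + 1 ↔ τ i = i + 1) ∧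
      (σ (i + 1) = i + 1 + 1 ↔ τ (i + 1) = i + 1 + 1) := by
    refine forall_of_zero_of_add_one ⟨by simpa using h0, by simpa [one_add_one_eq_two] using h1⟩
      fun i ⟨hi, hi1⟩ => ⟨hi1, ?_⟩
    rwa [show i + 1 + 1 = i + 2 by ring, hσ.apply_add_two_iff hn, hτ.apply_add_two_iff hn]
  exact Equiv.ext fun i => apply_eq_apply_of_iff hn hσ hτ (hdir i).1

theorem sq_eq_one_iff (hn : 3 ≤ n) (hσ : IsCycleStep σ) :
    σ ^ 2 = 1 ↔ ∀ i, (σ i = i + 1 ↔ σ (i + 1) ≠ i + 1 + 1) := by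
  have h2 := two_ne_zero_of_three_le hn
  constructor
  · intro hsq i
    have hinv := Perm.apply_apply_of_sq_eq_one hsq
    constructor
    · intro hi hi1
      have hback := hinv i
      rw [hi, hi1] at hback
      exact h2 (by linear_combination hback)
    · intro hi1
      refine (hσ i).resolve_right fun hi => ?_
      have hi1' : σ (i + 1) = i := ((hσ (i + 1)).resolve_left hi1).trans (by ring)
      exact sub_one_ne_add_one hn i (σ.injective ((hi ▸ hinv i).trans hi1'.symm))
  · intro halt
    ext i
    simp only [sq, Perm.mul_apply, Perm.one_apply]
    rcases hσ i with hi | hi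
    · rw [hi, (hσ (i + 1)).resolve_left ((halt i).mp hi), add_sub_cancel_right]
    · have hprev := halt (i - 1)
      rw [sub_add_cancel, hi] at hprev
      rw [hi, hprev.mpr (sub_one_ne_add_one hn i)]

theorem eq_or_eq_or_sq_eq_one (hn : 3 ≤ n) (hσ : IsCycleStep σ) :
    σ = Equiv.addRight 1 ∨ σ = (Equiv.addRight 1)⁻¹ ∨ σ ^ 2 = 1 := by
  by_cases halt : σ 0 = 1 ↔ σ 1 ≠ 2
  · refine Or.inr (Or.inr ((hσ.sq_eq_one_iff hn).mpr (forall_of_zero_of_add_one ?_ ?_)))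
    · simpa [one_add_one_eq_two] using halt
    · intro i hi
      rw [show i + 1 + 1 = i + 2 by ring] at hi ⊢
      rw [Ne, hσ.apply_add_two_iff hn]
      tauto
  have hsame : σ 0 = 1 ↔ σ 1 = 2 := by tauto
  by_cases h0 : σ 0 = 1
  · exact Or.inl (hσ.ext_of_iff hn isCycleStep_addRight_one (by simp [h0])
      (by simp [hsame.mp h0, one_add_one_eq_two]))
  · refine Or.inr (Or.inl (hσ.ext_of_iff hn isCycleStep_inv_addRight_one
      (iff_of_false h0 ?_) (iff_of_false (mt hsame.mpr h0) ?_)))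
    · simpa [Perm.inv_def] using sub_one_ne_add_one hn 0
    · simpa [Perm.inv_def] using (two_ne_zero_of_three_le hn).symm

theorem sq_ne_one_of_odd (hn : 3 ≤ n) (hodd : Odd n) (hσ : IsCycleStep σ) : σ ^ 2 ≠ 1 := by
  intro hsq
  obtain ⟨k, hk⟩ := hodd
  have hwrap : (2 : Fin n) * ((k + 1 : ℕ) : Fin n) = 1 := by
    have hcast : (2 : Fin n) * ((k + 1 : ℕ) : Fin n) = ((2 * k + 1 : ℕ) : Fin n) + 1 := by
      push_cast
      ring
    rw [hcast, ← hk, Fin.natCast_self, zero_add]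
  -- `1 = 0 + 2 (k + 1)`, so `σ` moves `0` and `1` in the same direction; an involution cannot
  have hper := hσ.apply_add_two_mul_iff hn 0 (k + 1)
  have halt := (hσ.sq_eq_one_iff hn).mp hsq 0
  rw [zero_add, hwrap] at hper
  simp only [zero_add] at hper halt
  tauto

theorem eq_of_sq_eq_one (hn : 3 ≤ n) (hσ : IsCycleStep σ) (hτ : IsCycleStep τ)
    (hσ2 : σ ^ 2 = 1) (hτ2 : τ ^ 2 = 1) (h0 : σ 0 = τ 0) : σ = τ := by
  have hσ' := (hσ.sq_eq_one_iff hn).mp hσ2 0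
  have hτ' := (hτ.sq_eq_one_iff hn).mp hτ2 0
  simp only [zero_add, one_add_one_eq_two, h0] at hσ' hτ'
  exact hσ.ext_of_iff hn hτ (by rw [h0]) (by tauto)

end IsCycleStep

theorem val_add_one_mod_two_ne (he : Even n) (a : Fin n) :
    ((a + 1 : Fin n) : ℕ) % 2 ≠ (a : ℕ) % 2 := by
  obtain ⟨m, hm⟩ := he
  have hn := NeZero.ne n
  rw [Fin.val_add, Fin.val_one', Nat.mod_mod_of_dvd _ ⟨m, by omega⟩,
    Nat.mod_eq_of_lt (show 1 < n by omega)]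
  omega

theorem val_sub_one_mod_two_ne (he : Even n) (a : Fin n) :
    ((a - 1 : Fin n) : ℕ) % 2 ≠ (a : ℕ) % 2 := by
  obtain ⟨m, hm⟩ := he
  have hn := NeZero.ne n
  have ha := a.isLt
  rw [Fin.val_sub, Fin.val_one', Nat.mod_mod_of_dvd _ ⟨m, by omega⟩,
    Nat.mod_eq_of_lt (show 1 < n by omega)]
  omega

theorem involutive_cycleMatching (he : Even n) (p : Fin 2) :
    Function.Involutive fun a : Fin n => if (a : ℕ) % 2 = p then a + 1 else a - 1 := by
  intro a
  by_cases ha : (a : ℕ) % 2 = p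
  · have := val_add_one_mod_two_ne he a
    simp only [if_pos ha, if_neg (show ((a + 1 : Fin n) : ℕ) % 2 ≠ p by omega),
      add_sub_cancel_right]
  · have := val_sub_one_mod_two_ne he a
    have := p.isLt
    simp only [if_neg ha, if_pos (show ((a - 1 : Fin n) : ℕ) % 2 = p by omega), sub_add_cancel]

def cycleMatching (he : Even n) (p : Fin 2) : Perm (Fin n) :=
  (involutive_cycleMatching he p).toPerm

theorem cycleMatching_apply (he : Even n) (p : Fin 2) (a : Fin n) :
    cycleMatching he p a = if (a : ℕ) % 2 = p then a + 1 else a - 1 := rfl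

theorem isCycleStep_cycleMatching (he : Even n) (p : Fin 2) : IsCycleStep (cycleMatching he p) :=
  fun a => by rw [cycleMatching_apply]; split_ifs <;> simp

theorem cycleMatching_sq (he : Even n) (p : Fin 2) : cycleMatching he p ^ 2 = 1 :=
  Equiv.ext (involutive_cycleMatching he p)

theorem filter_sq_eq_one_of_even (hn : 3 ≤ n) (he : Even n) :
    ({σ | IsCycleStep σ ∧ σ ^ 2 = 1} : Finset (Perm (Fin n))) =
      {cycleMatching he 0, cycleMatching he 1} := by
  ext σ
  simp only [mem_filter, mem_univ, true_and, mem_insert, mem_singleton]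
  constructor
  · rintro ⟨hσ, hσ2⟩
    have hm := isCycleStep_cycleMatching he
    have hm2 := cycleMatching_sq he
    rcases hσ 0 with h0 | h0
    · exact Or.inl (hσ.eq_of_sq_eq_one hn (hm 0) hσ2 (hm2 0) (by simp [h0, cycleMatching_apply]))
    · exact Or.inr (hσ.eq_of_sq_eq_one hn (hm 1) hσ2 (hm2 1) (by simp [h0, cycleMatching_apply]))
  · rintro (rfl | rfl) <;> exact ⟨isCycleStep_cycleMatching he _, cycleMatching_sq he _⟩

theorem filter_sq_eq_one_of_odd (hn : 3 ≤ n) (hodd : Odd n) :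
    ({σ | IsCycleStep σ ∧ σ ^ 2 = 1} : Finset (Perm (Fin n))) = ∅ :=
  filter_eq_empty_iff.mpr fun _ _ ⟨hσ, hσ2⟩ => hσ.sq_ne_one_of_odd hn hodd hσ2

theorem sign_addRight_one : Perm.sign (Equiv.addRight (1 : Fin n)) = (-1) ^ (n + 1) := by
  obtain ⟨m, rfl⟩ := Nat.exists_eq_succ_of_ne_zero (NeZero.ne n)
  rw [show Equiv.addRight (1 : Fin (m + 1)) = finRotate (m + 1) from
    Equiv.ext fun i => (finRotate_apply i).symm, sign_finRotate]
  simp [pow_succ]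

theorem addRight_one_sq_ne_one (hn : 3 ≤ n) : Equiv.addRight (1 : Fin n) ^ 2 ≠ 1 := fun h =>
  two_ne_zero_of_three_le hn (by simpa [sq, one_add_one_eq_two] using congrArg (· 0) h)

theorem filter_isCycleStep_eq (hn : 3 ≤ n) :
    ({σ | IsCycleStep σ} : Finset (Perm (Fin n))) =
      insert (Equiv.addRight 1) (insert (Equiv.addRight 1)⁻¹
        ({σ | IsCycleStep σ ∧ σ ^ 2 = 1} : Finset (Perm (Fin n)))) := by
  ext σ
  simp only [mem_filter, mem_univ, true_and, mem_insert]
  constructor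
  · exact fun hσ => (hσ.eq_or_eq_or_sq_eq_one hn).imp_right (Or.imp_right (⟨hσ, ·⟩))
  · rintro (rfl | rfl | ⟨hσ, -⟩)
    exacts [isCycleStep_addRight_one, isCycleStep_inv_addRight_one, hσ]

variable {R : Type*} [CommRing R]

theorem det_eq_sum_isCycleStep (M : Matrix (Fin n) (Fin n) R)
    (hM : ∀ a b, b ≠ a + 1 → a ≠ b + 1 → M a b = 0) :
    M.det = ∑ σ ∈ {σ | IsCycleStep σ}, Perm.sign σ • ∏ i, M (σ i) i := by
  rw [Matrix.det_apply, sum_filter_of_ne]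
  intro σ _ hne
  by_contra hσ
  unfold IsCycleStep at hσ
  push Not at hσ
  obtain ⟨i, hfwd, hbwd⟩ := hσ
  have hzero : M (σ i) i = 0 := hM _ _ (fun h => hbwd (eq_sub_of_add_eq h.symm)) hfwd
  exact hne (by rw [prod_eq_zero (f := fun i => M (σ i) i) (mem_univ i) hzero, smul_zero])

theorem prod_inv_addRight_one (M : Matrix (Fin n) (Fin n) R) :
    ∏ i, M ((Equiv.addRight 1)⁻¹ i) i = ∏ i, M i (i + 1) := by
  rw [← Equiv.prod_comp (Equiv.addRight 1)⁻¹ fun i => M i (i + 1)]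
  simp [Perm.inv_def]

theorem IsCycleStep.prod_eq_one (hn : 3 ≤ n) {σ : Perm (Fin n)} (hσ : IsCycleStep σ)
    (hσ2 : σ ^ 2 = 1) (M : Matrix (Fin n) (Fin n) R)
    (hunit : ∀ a, M a (a + 1) * M (a + 1) a = 1) : ∏ i, M (σ i) i = 1 := by
  have hinv := Perm.apply_apply_of_sq_eq_one hσ2
  refine prod_ninvolution σ (fun i => ?_) (fun i _ => ?_) (fun _ => mem_univ _) hinv
  · rw [hinv]
    rcases hσ i with h | h
    · rw [h, mul_comm, hunit]
    · simpa [h] using hunit (i - 1)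
  · exact hσ.apply_ne hn i

theorem IsCycleStep.sign_eq (hn : 3 ≤ n) {σ : Perm (Fin n)} (hσ : IsCycleStep σ)
    (hσ2 : σ ^ 2 = 1) : Perm.sign σ = (-1) ^ (n / 2) := by
  rw [Perm.sign_of_pow_two_eq_one hσ2, Fintype.card_fin, Fintype.card_eq_zero_iff.mpr,
    Nat.sub_zero]
  exact ⟨fun ⟨x, hx⟩ => hσ.apply_ne hn x hx⟩

theorem cycleMatching_zero_ne_one (hn : 3 ≤ n) (he : Even n) :
    cycleMatching he 0 ≠ cycleMatching he 1 := fun h =>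
  sub_one_ne_add_one hn 0 (by simpa [cycleMatching_apply] using (congrArg (· 0) h).symm)

theorem sum_filter_sq_eq_one (hn : 3 ≤ n) (M : Matrix (Fin n) (Fin n) R)
    (hunit : ∀ a, M a (a + 1) * M (a + 1) a = 1) :
    ∑ σ ∈ ({σ | IsCycleStep σ ∧ σ ^ 2 = 1} : Finset (Perm (Fin n))),
      Perm.sign σ • ∏ i, M (σ i) i = (-1) ^ (n / 2) * (1 + (-1) ^ n) := by
  have hterm : ∀ σ ∈ ({σ | IsCycleStep σ ∧ σ ^ 2 = 1} : Finset (Perm (Fin n))),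
      Perm.sign σ • ∏ i, M (σ i) i = (-1) ^ (n / 2) := fun σ hmem => by
    obtain ⟨hσ, hσ2⟩ := (mem_filter.mp hmem).2
    rw [hσ.sign_eq hn hσ2, hσ.prod_eq_one hn hσ2 M hunit]
    simp [Units.smul_def]
  rw [sum_congr rfl hterm, sum_const]
  rcases Nat.even_or_odd n with he | hodd
  · rw [filter_sq_eq_one_of_even hn he, card_pair (cycleMatching_zero_ne_one hn he),
      he.neg_one_pow]
    simp only [nsmul_eq_mul, Nat.cast_ofNat]
    ring
  · rw [filter_sq_eq_one_of_odd hn hodd, card_empty, hodd.neg_one_pow]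
    simp

theorem det_eq_of_cycle_support (hn : 3 ≤ n) (M : Matrix (Fin n) (Fin n) R)
    (hM : ∀ a b, b ≠ a + 1 → a ≠ b + 1 → M a b = 0)
    (hunit : ∀ a, M a (a + 1) * M (a + 1) a = 1) :
    M.det = (-1) ^ (n + 1) * (∏ a, M a (a + 1) + ∏ a, M (a + 1) a) +
      (-1) ^ (n / 2) * (1 + (-1) ^ n) := by
  have hsq := addRight_one_sq_ne_one hn
  have hne : Equiv.addRight (1 : Fin n) ≠ (Equiv.addRight 1)⁻¹ := fun h =>
    hsq (by rw [sq]; exact mul_eq_one_iff_eq_inv.mpr h)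
  rw [det_eq_sum_isCycleStep M hM, filter_isCycleStep_eq hn, sum_insert, sum_insert,
    sum_filter_sq_eq_one hn M hunit, Perm.sign_inv, prod_inv_addRight_one, sign_addRight_one]
  · simp only [coe_addRight, Units.smul_def, zsmul_eq_mul]
    push_cast
    ring
  · simp only [mem_filter, mem_univ, true_and, inv_pow, inv_eq_one, not_and]
    exact fun _ => hsq
  · simp only [mem_insert, mem_filter, mem_univ, true_and, not_or, not_and]
    exact ⟨hne, fun _ => hsq⟩

end MixedCycle

theorem Fin.prod_ite_val_lt {M : Type*} [CommMonoid M] {n j : ℕ} (hj : j ≤ n) (x : M) :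
    ∏ a : Fin n, (if (a : ℕ) < j then x else 1) = x ^ j := by
  rw [prod_ite, Finset.prod_const, prod_const_one, mul_one, Fin.card_filter_val_lt,
    min_eq_right hj]

theorem Complex.exp_mul_I_pow_add_exp_neg_mul_I_pow (η : ℝ) (j : ℕ) :
    exp (η * I) ^ j + exp (-η * I) ^ j = 2 * Real.cos (η * j) := by
  rw [← exp_nat_mul, ← exp_nat_mul, ofReal_cos, two_cos]
  push_cast
  ring_nf

/-- Determinant of the η-Hermitian adjacency matrix of the mixed cycle `C_n^j`:
vertices are `0, …, n-1` (vertex `a` standing for `x_{a+1}`); the cycle edge from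
vertex `a` to `a+1 (mod n)` carries entry `e^{iη}` (and conjugate on the reverse)
when it is one of the first `j` (directed) arcs, and entry `1` otherwise. -/
theorem stmt_2 (n j : ℕ) (hn : 3 ≤ n) (hj : j ≤ n) (η : ℝ)
    (H : Matrix (Fin n) (Fin n) ℂ)
    (hH : ∀ a b : Fin n, H a b =
      if (b : ℕ) = ((a : ℕ) + 1) % n then
        (if (a : ℕ) < j then Complex.exp (η * Complex.I) else 1)
      else if (a : ℕ) = ((b : ℕ) + 1) % n then
        (if (b : ℕ) < j then Complex.exp (-(η : ℂ) * Complex.I) else 1)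
      else 0) :
    H.det = (-1 : ℂ) ^ (n + 1) * 2 * (Real.cos (η * j) : ℂ)
      + (-1 : ℂ) ^ (n / 2) * (1 + (-1 : ℂ) ^ n) := by
  have : NeZero n := ⟨by omega⟩
  have hsucc : ∀ a b : Fin n, (b : ℕ) = ((a : ℕ) + 1) % n ↔ b = a + 1 := fun a b => by
    rw [Fin.ext_iff, Fin.val_add, Fin.val_one', Nat.add_mod_mod]
  simp only [hsucc] at hH
  have hfwd : ∀ a, H a (a + 1) = if (a : ℕ) < j then exp (η * I) else 1 := fun a => by
    rw [hH, if_pos rfl]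
  have hbwd : ∀ a, H (a + 1) a = if (a : ℕ) < j then exp (-η * I) else 1 := fun a => by
    rw [hH, if_neg fun h => MixedCycle.two_ne_zero_of_three_le hn (by linear_combination -h),
      if_pos rfl]
  have hcycle : ∀ a b, b ≠ a + 1 → a ≠ b + 1 → H a b = 0 := fun a b h₁ h₂ => by
    rw [hH, if_neg h₁, if_neg h₂]
  have hunit : ∀ a, H a (a + 1) * H (a + 1) a = 1 := fun a => by
    rw [hfwd, hbwd]
    split_ifs <;> simp [← exp_add]
  rw [MixedCycle.det_eq_of_cycle_support hn H hcycle hunit,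
    Fintype.prod_congr _ _ hfwd, Fintype.prod_congr _ _ hbwd, Fin.prod_ite_val_lt hj,
    Fin.prod_ite_val_lt hj, exp_mul_I_pow_add_exp_neg_mul_I_pow]
  ring
end

section
/- Let G be a mixed graph whose underlying graph has girth s+1, let H_η(G) be its η-Hermitian adjacency matrix and A the ordinary adjacency matrix of the underlying graph. Then for each l ∈ {1,...,s}, the coefficient of λ^{n-l} in det(λI - H_η(G)) equals the coefficient of λ^{n-l} in det(λI - A), where n is the number of vertices. -/
/-!
Expanding `det (λ • 1 - M) = ∑ σ, sign σ • ∏ i, (λ • δ (σ i) i - M (σ i) i)` for a matrix with zero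
diagonal, the coefficient of `λ ^ (n - l)` only sees the permutations `σ` moving exactly `l`
points, through `sign σ • ∏ (-M (σ i) i)` over the moved points. For `H_η` and for `A` this term
vanishes unless every moved point `i` is adjacent to `σ i` in `G^±`. In that case a cycle of `σ` of
length at least three traces a cycle of `G^±` of length at most `l < girth`, so `σ` is a product of
disjoint transpositions, and each transposition `(x y)` contributes `H x y * H y x = 1`, exactly
as it does for `A`.
-/

open Finset Polynomial

theorem Matrix.charpoly_coeff_eq_sum_perm_of_diag_eq_zero {n R : Type*} [Fintype n]
    [DecidableEq n] [CommRing R] (M : Matrix n n R) (hd : ∀ i, M i i = 0) (k : ℕ) :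
    M.charpoly.coeff k = ∑ σ : Equiv.Perm n,
      if Fintype.card n - #σ.support = k then Equiv.Perm.sign σ • ∏ i ∈ σ.support, -M (σ i) i
      else 0 := by
  rw [Matrix.charpoly, Matrix.det_apply, finsetSum_coeff]
  refine sum_congr rfl fun σ _ => ?_
  have hprod : ∏ i, charmatrix M (σ i) i =
      C (∏ i ∈ σ.support, -M (σ i) i) * X ^ (Fintype.card n - #σ.support) := by
    rw [← prod_mul_prod_compl σ.support, map_prod, ← card_compl]
    congr 1
    · refine prod_congr rfl fun i hi => ?_
      rw [charmatrix_apply_ne _ _ _ (Equiv.Perm.mem_support.mp hi), map_neg]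
    · refine prod_eq_pow_card fun i hi => ?_
      rw [Equiv.Perm.notMem_support.mp (mem_compl.mp hi), charmatrix_apply_eq, hd, map_zero,
        sub_zero]
  rw [coeff_smul, hprod, coeff_C_mul_X_pow, smul_ite, smul_zero]
  exact if_congr eq_comm rfl rfl

namespace SimpleGraph

variable {V : Type*} {G : SimpleGraph V}

theorem cycleGraph_isContained_of_perm [Fintype V] [DecidableEq V] {σ : Equiv.Perm V}
    (hσ : ∀ x ∈ σ.support, G.Adj (σ x) x) {x : V} (hx : σ x ≠ x) :
    cycleGraph #(σ.cycleOf x).support ⊑ G := by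
  have hcyc := σ.isCycleOn_support_cycleOf x
  have hxs : x ∈ (σ.cycleOf x).support :=
    Equiv.Perm.mem_support_cycleOf_iff.mpr ⟨.refl σ x, Equiv.Perm.mem_support.mpr hx⟩
  obtain ⟨k, hk⟩ := Nat.exists_eq_add_of_le' (Equiv.Perm.two_le_card_support_cycleOf_iff.mpr hx)
  have pow_eq_iff (a b : ℕ) : (σ ^ a) x = (σ ^ b) x ↔ a ≡ b [MOD k + 2] := by
    rw [hcyc.pow_apply_eq_pow_apply hxs, hk]
  let f : Fin (k + 2) → V := fun j => (σ ^ (j : ℕ)) x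
  have step (j : Fin (k + 2)) : G.Adj (f (j + 1)) (f j) := by
    have hj : f (j + 1) = σ (f j) := by
      rw [← Equiv.Perm.mul_apply, ← pow_succ', pow_eq_iff, Fin.val_add, Fin.val_one]
      exact Nat.mod_modEq _ _
    rw [hj]
    exact hσ _ (Equiv.Perm.pow_apply_mem_support.mpr (Equiv.Perm.mem_support.mpr hx))
  let φ : cycleGraph (k + 2) →g G :=
    ⟨f, fun {u v} huv => by
      rcases cycleGraph_adj.mp huv with h | h
      · rw [sub_eq_iff_eq_add'.mp h]; exact step v
      · rw [sub_eq_iff_eq_add'.mp h]; exact (step u).symm⟩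
  have hφ : Function.Injective φ := fun u v huv =>
    Fin.ext (((pow_eq_iff u v).mp huv).eq_of_lt_of_lt u.isLt v.isLt)
  rw [hk]
  exact (φ.toCopy hφ).isContained

theorem involutive_of_card_support_lt_girth [Fintype V] [DecidableEq V] {σ : Equiv.Perm V}
    (hσ : ∀ x ∈ σ.support, G.Adj (σ x) x) (hcard : #σ.support < G.girth) :
    Function.Involutive σ := by
  intro x
  by_contra hx
  have hσx : σ x ≠ x := fun h => hx (by rw [h, h])
  have hthree : 2 < #(σ.cycleOf x).support := by
    have htwo := Equiv.Perm.two_le_card_support_cycleOf_iff.mpr hσx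
    refine lt_of_le_of_ne htwo fun h => hx ?_
    have := (σ.isCycleOn_support_cycleOf x).pow_card_apply
      (Equiv.Perm.mem_support_cycleOf_iff.mpr ⟨.refl σ x, Equiv.Perm.mem_support.mpr hσx⟩)
    rwa [← h, pow_two, Equiv.Perm.mul_apply] at this
  obtain ⟨v, w, hw, hlen⟩ :=
    (cycleGraph_isContained_iff hthree).mp (cycleGraph_isContained_of_perm hσ hσx)
  have := girth_le_length hw
  have := card_le_card (σ.support_cycleOf_le x)
  omega

/-- `M` gives each dart of `G` a gain, the reversed dart carrying the inverse gain. -/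
structure IsGainMatrix {R : Type*} [Zero R] [One R] [Mul R] (G : SimpleGraph V)
    (M : Matrix V V R) : Prop where
  apply_eq_zero : ∀ x y, ¬G.Adj x y → M x y = 0
  mul_apply_eq_one : ∀ x y, G.Adj x y → M x y * M y x = 1

theorem isGainMatrix_adjMatrix (R : Type*) [MulZeroOneClass R] [DecidableRel G.Adj] :
    G.IsGainMatrix (G.adjMatrix R) where
  apply_eq_zero x y h := by simp [h]
  mul_apply_eq_one x y h := by simp [h, h.symm]

namespace IsGainMatrix

variable {R : Type*} [CommRing R] {M : Matrix V V R}

theorem prod_support_neg_apply_eq_one [Fintype V] [DecidableEq V] (hM : G.IsGainMatrix M)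
    {σ : Equiv.Perm V} (hσ : ∀ x ∈ σ.support, G.Adj (σ x) x) (hcard : #σ.support < G.girth) :
    ∏ i ∈ σ.support, -M (σ i) i = 1 := by
  have hinv := involutive_of_card_support_lt_girth hσ hcard
  refine prod_involution (fun a _ => σ a) (fun a ha => ?_)
    (fun a ha _ => Equiv.Perm.mem_support.mp ha)
    (fun a ha => Equiv.Perm.apply_mem_support.mpr ha) (fun a _ => hinv a)
  rw [neg_mul_neg, hinv a]
  exact hM.mul_apply_eq_one _ _ (hσ a ha)

theorem prod_support_neg_apply_eq [Fintype V] [DecidableEq V] {N : Matrix V V R}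
    (hM : G.IsGainMatrix M) (hN : G.IsGainMatrix N) {σ : Equiv.Perm V}
    (hcard : #σ.support < G.girth) :
    ∏ i ∈ σ.support, -M (σ i) i = ∏ i ∈ σ.support, -N (σ i) i := by
  by_cases hσ : ∀ x ∈ σ.support, G.Adj (σ x) x
  · rw [hM.prod_support_neg_apply_eq_one hσ hcard, hN.prod_support_neg_apply_eq_one hσ hcard]
  · obtain ⟨x, hx, hnadj⟩ := not_forall₂.mp hσ
    rw [prod_eq_zero hx (by rw [hM.apply_eq_zero _ _ hnadj, neg_zero]),
      prod_eq_zero hx (by rw [hN.apply_eq_zero _ _ hnadj, neg_zero])]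

theorem charpoly_coeff_eq [Fintype V] [DecidableEq V] {N : Matrix V V R}
    (hM : G.IsGainMatrix M) (hN : G.IsGainMatrix N) {k : ℕ} (hk : Fintype.card V - k < G.girth) :
    M.charpoly.coeff k = N.charpoly.coeff k := by
  rw [M.charpoly_coeff_eq_sum_perm_of_diag_eq_zero (fun i => hM.apply_eq_zero i i G.irrefl),
    N.charpoly_coeff_eq_sum_perm_of_diag_eq_zero (fun i => hN.apply_eq_zero i i G.irrefl)]
  refine sum_congr rfl fun σ _ => ?_
  split_ifs with hσ
  · have := card_le_univ σ.support
    rw [hM.prod_support_neg_apply_eq hN (by omega)]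
  · rfl

end IsGainMatrix

end SimpleGraph

noncomputable def mixedGraphHermitianAdjMatrix {V : Type*} (η : ℝ) (A : V → V → Prop)
    [DecidableRel A] : Matrix V V ℂ := fun x y =>
  if A x y ∧ A y x then 1
  else if A x y then Complex.exp (η * Complex.I)
  else if A y x then Complex.exp (-(η : ℂ) * Complex.I)
  else 0

theorem isGainMatrix_mixedGraphHermitianAdjMatrix {V : Type*} (η : ℝ) {A : V → V → Prop}
    [DecidableRel A] (hirr : ∀ x, ¬A x x) {G : SimpleGraph V}
    (hG : ∀ x y, G.Adj x y ↔ (x ≠ y ∧ (A x y ∨ A y x))) :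
    G.IsGainMatrix (mixedGraphHermitianAdjMatrix η A) where
  apply_eq_zero x y h := by
    by_cases hxy : x = y
    · simp [mixedGraphHermitianAdjMatrix, hxy, hirr]
    · obtain ⟨h1, h2⟩ : ¬A x y ∧ ¬A y x := by simpa [hG, hxy] using h
      simp [mixedGraphHermitianAdjMatrix, h1, h2]
  mul_apply_eq_one x y h := by
    have hA := ((hG x y).mp h).2
    unfold mixedGraphHermitianAdjMatrix
    by_cases h1 : A x y <;> by_cases h2 : A y x <;> simp_all [← Complex.exp_add]

/-- Coefficients of the characteristic polynomial of the η-Hermitian adjacency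
matrix of a mixed graph with girth `s+1` agree with those of the adjacency
matrix of the underlying graph in the top `s` coefficients below the leading one. -/
theorem stmt_3 {V : Type} [Fintype V] [DecidableEq V] (η : ℝ)
    (A : V → V → Prop) [DecidableRel A] (hirr : ∀ x, ¬ A x x)
    (G : SimpleGraph V) [DecidableRel G.Adj]
    (hG : ∀ x y, G.Adj x y ↔ (x ≠ y ∧ (A x y ∨ A y x)))
    (H : Matrix V V ℂ)
    (hH : ∀ x y, H x y =
      if A x y ∧ A y x then 1
      else if A x y then Complex.exp (η * Complex.I)
      else if A y x then Complex.exp (-(η : ℂ) * Complex.I)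
      else 0)
    (s : ℕ) (hgirth : G.girth = (s + 1 : ℕ)) :
    ∀ l : ℕ, 1 ≤ l → l ≤ s →
      (Matrix.charpoly H).coeff (Fintype.card V - l) =
      (Matrix.charpoly (G.adjMatrix ℂ)).coeff (Fintype.card V - l) := by
  intro l _ hls
  rw [show H = mixedGraphHermitianAdjMatrix η A from Matrix.ext hH]
  refine (isGainMatrix_mixedGraphHermitianAdjMatrix η hirr hG).charpoly_coeff_eq
    (G.isGainMatrix_adjMatrix ℂ) ?_
  omega
end

section
/- If G is a mixed graph whose underlying graph is a tree (a mixed tree), then the characteristic polynomial of its η-Hermitian adjacency matrix H_η(G) equals the characteristic polynomial of the adjacency matrix of the underlying tree; in particular G and its underlying graph are cospectral. -/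
/-!
A permutation contributes to the expansion of `det (X - M)` only if it sends every vertex it
moves to a neighbour. In a forest such a permutation is an involution, because an orbit of
length `≥ 3` would trace a cycle of the graph. Hence the characteristic polynomial of a
matrix supported on a forest depends only on its diagonal and on the products
`M x y * M y x` along edges. For `H_η` these products are `1 * 1` or `e^{iη} e^{-iη} = 1`,
exactly as for the adjacency matrix of the underlying tree.
-/

open Complex

namespace Finset

theorem prod_eq_prod_of_involution {ι M : Type*} [CommMonoid M] {s : Finset ι} {f g : ι → M}
    (σ : ι → ι) (hmem : ∀ x ∈ s, σ x ∈ s) (hinv : ∀ x ∈ s, σ (σ x) = x)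
    (hne : ∀ x ∈ s, σ x ≠ x) (hpair : ∀ x ∈ s, f x * f (σ x) = g x * g (σ x)) :
    ∏ x ∈ s, f x = ∏ x ∈ s, g x := by
  classical
  induction s using Finset.strongInduction with
  | H s ih =>
  rcases s.eq_empty_or_nonempty with rfl | ⟨x, hx⟩
  · simp
  have hσx : σ x ∈ s.erase x := mem_erase.2 ⟨hne x hx, hmem x hx⟩
  set t := (s.erase x).erase (σ x)
  have hsplit (h : ι → M) : ∏ y ∈ s, h y = h x * h (σ x) * ∏ y ∈ t, h y := by
    rw [← mul_prod_erase s h hx, ← mul_prod_erase _ h hσx, mul_assoc]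
  have ht : t ⊆ s := (erase_subset _ _).trans (erase_subset _ _)
  have htmem : ∀ y ∈ t, σ y ∈ t := by
    intro y hy
    obtain ⟨hyσx, hyx, hys⟩ : y ≠ σ x ∧ y ≠ x ∧ y ∈ s := by simpa [t] using hy
    simp only [t, mem_erase]
    refine ⟨fun h => hyx ?_, fun h => hyσx ?_, hmem y hys⟩
    · rw [← hinv y hys, h, hinv x hx]
    · rw [← hinv y hys, h]
  rw [hsplit f, hsplit g, hpair x hx,
    ih t ((erase_subset _ _).trans_ssubset (erase_ssubset hx)) htmem
      (fun y hy => hinv y (ht hy)) (fun y hy => hne y (ht hy)) (fun y hy => hpair y (ht hy))]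

end Finset

namespace SimpleGraph

variable {V : Type*} {G : SimpleGraph V}

theorem exists_walk_iterate (f : V → V) (v : V) (hadj : ∀ l, G.Adj (f^[l + 1] v) (f^[l] v))
    (m : ℕ) : ∃ p : G.Walk (f^[m] v) v,
      p.support = ((List.range (m + 1)).map (f^[·] v)).reverse ∧ p.length = m := by
  induction m with
  | zero => exact ⟨Walk.nil, by simp, rfl⟩
  | succ m ih =>
    obtain ⟨p, hsupp, hlen⟩ := ih
    refine ⟨Walk.cons (hadj m) p, ?_, by rw [Walk.length_cons, hlen]⟩
    rw [Walk.support_cons, hsupp, List.range_succ (n := m + 1), List.map_append,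
      List.reverse_append]
    rfl

theorem IsAcyclic.involutive_of_adj [Finite V] (hG : G.IsAcyclic) (σ : Equiv.Perm V)
    (hσ : ∀ v, σ v ≠ v → G.Adj (σ v) v) : Function.Involutive σ := by
  intro v
  by_contra hv
  set k := Function.minimalPeriod σ v
  have hper : σ^[k] v = v := Function.iterate_minimalPeriod
  have hmoved : σ v ≠ v := fun h => hv (by rw [h, h])
  have hk : 3 ≤ k := by
    have hpos : 0 < k := Function.minimalPeriod_pos_of_mem_periodicPts
      (σ.injective.mem_periodicPts v)
    by_contra! hk
    interval_cases k
    · exact hmoved hper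
    · exact hv hper
  have hadj (l : ℕ) : G.Adj (σ^[l + 1] v) (σ^[l] v) := by
    rw [Function.iterate_succ_apply']
    refine hσ _ fun h => hmoved ((σ.injective.iterate l) ?_)
    rwa [← Function.iterate_succ_apply, Function.iterate_succ_apply']
  obtain ⟨p, hsupp, hlen⟩ := exists_walk_iterate σ v hadj (k - 1)
  have hpath : p.IsPath := by
    refine Walk.IsPath.mk' ?_
    rw [hsupp, List.nodup_reverse]
    refine List.Nodup.map_on (fun x hx y hy hxy => ?_) List.nodup_range
    exact Function.iterate_injOn_Iio_minimalPeriod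
      (by have := List.mem_range.1 hx; omega : x < k)
      (by have := List.mem_range.1 hy; omega : y < k) hxy
  have hedge : G.Adj (σ^[k - 1] v) v := by
    have := hadj (k - 1)
    rw [Nat.sub_add_cancel (by omega), hper] at this
    exact this.symm
  have := congrArg (fun q : G.Path _ _ => q.val.length)
    (Subsingleton.elim (h := hG.subsingleton_path _ _) ⟨p, hpath⟩ (Path.singleton hedge))
  simp only [Path.singleton, hlen, Walk.length_cons, Walk.length_nil] at this
  omega

end SimpleGraph

namespace Matrix

open Finset Polynomial

variable {n R : Type*} [Fintype n] [DecidableEq n] [CommRing R] {G : SimpleGraph n}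
  {M N : Matrix n n R}

theorem prod_perm_eq_of_isAcyclic (hG : G.IsAcyclic) (hdiag : ∀ x, M x x = N x x)
    (hM : ∀ x y, x ≠ y → ¬ G.Adj x y → M x y = 0) (hN : ∀ x y, x ≠ y → ¬ G.Adj x y → N x y = 0)
    (hpair : ∀ x y, G.Adj x y → M x y * M y x = N x y * N y x) (σ : Equiv.Perm n) :
    ∏ x, M (σ x) x = ∏ x, N (σ x) x := by
  by_cases hσ : ∃ x, σ x ≠ x ∧ ¬ G.Adj (σ x) x
  · obtain ⟨x, hmoved, hnadj⟩ := hσ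
    rw [prod_eq_zero (f := fun x => M (σ x) x) (mem_univ x) (hM _ _ hmoved hnadj),
      prod_eq_zero (f := fun x => N (σ x) x) (mem_univ x) (hN _ _ hmoved hnadj)]
  simp only [not_exists, not_and, not_not] at hσ
  have hinv := hG.involutive_of_adj σ hσ
  rw [← prod_filter_mul_prod_filter_not univ (fun x => σ x = x),
    ← prod_filter_mul_prod_filter_not univ (fun x => σ x = x)]
  congr 1
  · refine prod_congr rfl fun x hx => ?_
    rw [(mem_filter.1 hx).2, hdiag]
  · refine prod_eq_prod_of_involution σ (fun x hx => ?_) (fun x _ => hinv x)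
      (fun x hx => (mem_filter.1 hx).2) (fun x hx => ?_)
    · simpa [hinv x, eq_comm] using hx
    · rw [hinv x, hpair _ _ (hσ x (mem_filter.1 hx).2)]

theorem det_eq_of_isAcyclic (hG : G.IsAcyclic) (hdiag : ∀ x, M x x = N x x)
    (hM : ∀ x y, x ≠ y → ¬ G.Adj x y → M x y = 0) (hN : ∀ x y, x ≠ y → ¬ G.Adj x y → N x y = 0)
    (hpair : ∀ x y, G.Adj x y → M x y * M y x = N x y * N y x) :
    M.det = N.det := by
  simp only [det_apply, prod_perm_eq_of_isAcyclic hG hdiag hM hN hpair]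

theorem charpoly_eq_of_isAcyclic (hG : G.IsAcyclic) (hdiag : ∀ x, M x x = N x x)
    (hM : ∀ x y, x ≠ y → ¬ G.Adj x y → M x y = 0) (hN : ∀ x y, x ≠ y → ¬ G.Adj x y → N x y = 0)
    (hpair : ∀ x y, G.Adj x y → M x y * M y x = N x y * N y x) :
    M.charpoly = N.charpoly := by
  refine det_eq_of_isAcyclic hG (fun x => by simp [charmatrix_apply_eq, hdiag])
    (fun x y hxy hnadj => ?_) (fun x y hxy hnadj => ?_) (fun x y hadj => ?_)
  · simp [charmatrix_apply_ne _ _ _ hxy, hM x y hxy hnadj]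
  · simp [charmatrix_apply_ne _ _ _ hxy, hN x y hxy hnadj]
  · simp only [charmatrix_apply_ne _ _ _ hadj.ne, charmatrix_apply_ne _ _ _ hadj.ne.symm,
      neg_mul_neg, ← C_mul, hpair x y hadj]

end Matrix

/-- A mixed tree and its underlying tree are `H_η`-cospectral: the characteristic
polynomials of the η-Hermitian adjacency matrix and the ordinary adjacency
matrix of the underlying graph coincide. -/
theorem stmt_4 {V : Type} [Fintype V] [DecidableEq V] (η : ℝ)
    (A : V → V → Prop) [DecidableRel A] (hirr : ∀ x, ¬ A x x)
    (G : SimpleGraph V) [DecidableRel G.Adj]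
    (hG : ∀ x y, G.Adj x y ↔ (x ≠ y ∧ (A x y ∨ A y x)))
    (H : Matrix V V ℂ)
    (hH : ∀ x y, H x y =
      if A x y ∧ A y x then 1
      else if A x y then Complex.exp (η * Complex.I)
      else if A y x then Complex.exp (-(η : ℂ) * Complex.I)
      else 0)
    (htree : G.IsTree) :
    Matrix.charpoly H = Matrix.charpoly (G.adjMatrix ℂ) := by
  refine Matrix.charpoly_eq_of_isAcyclic htree.isAcyclic (fun x => ?_)
    (fun x y hxy hnadj => ?_) (fun x y _ hnadj => ?_) (fun x y hadj => ?_)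
  · simp [hH, hirr]
  · have hA : ¬ A x y ∧ ¬ A y x := by simpa [hG, hxy, not_or] using hnadj
    simp [hH, hA]
  · simp [hnadj]
  · have hA : A x y ∨ A y x := ((hG x y).1 hadj).2
    have hunit : exp (η * I) * exp (-η * I) = 1 := by rw [← exp_add]; simp
    rw [hH, hH]
    simp only [G.adjMatrix_apply, hadj, hadj.symm, if_true, mul_one]
    split_ifs <;> simp_all [mul_comm]
end

section
/- Let G be a mixed graph with girth s+1 and let X = λI - H_η(G). For l ∈ {1,...,s}, every permutation σ of the vertex set that moves exactly l vertices and satisfies ∏_{x∈V} X_{x,σ(x)} ≠ 0 is a product of disjoint transpositions. -/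
/-!
A vertex `y` moved by `σ` has `X y (σ y) = -H y (σ y) ≠ 0`, so `y` is adjacent to `σ y` in the
underlying graph. If `σ (σ x) ≠ x`, the `σ`-orbit of `x` has length `k ≥ 3` and is traced out by a
`k`-cycle of the underlying graph, so `s + 1 = girth ≤ k ≤ #(moved vertices) = l ≤ s`.
-/

open Complex Polynomial

namespace Function

variable {α : Type*} {f : α → α} {x : α}

theorem iterate_eq_iterate_succ_of_sub_val_eq_one {u v : Fin (minimalPeriod f x)}
    (h : (u - v).val = 1) : f^[u] x = f^[v + 1] x := by
  rw [← iterate_mod_minimalPeriod_eq (n := v + 1)]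
  congr 1
  rcases le_or_gt v u with hvu | huv
  · rw [Fin.sub_val_of_le hvu] at h
    rw [Nat.mod_eq_of_lt (by omega)]
    omega
  · rw [Fin.coe_sub_iff_lt.mpr huv] at h
    rw [show v.val + 1 = minimalPeriod f x by omega, Nat.mod_self]
    omega

theorem two_lt_minimalPeriod (hx : x ∈ periodicPts f) (h2 : f (f x) ≠ x) :
    2 < minimalPeriod f x := by
  have hpos := minimalPeriod_pos_of_mem_periodicPts hx
  have hndvd : ¬ minimalPeriod f x ∣ 2 := fun hd => h2 (isPeriodicPt_iff_minimalPeriod_dvd.mpr hd)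
  by_contra hle
  interval_cases minimalPeriod f x <;> norm_num at hndvd

end Function

namespace SimpleGraph

open Function

variable {α : Type*} {G : SimpleGraph α} {f : α → α} {x : α}

theorem cycleGraph_minimalPeriod_isContained (hadj : ∀ n, G.Adj (f^[n] x) (f^[n + 1] x)) :
    cycleGraph (minimalPeriod f x) ⊑ G := by
  refine ⟨⟨⟨fun i => f^[i] x, fun {u v} huv => ?_⟩, fun u v huv => ?_⟩⟩
  · rcases cycleGraph_adj'.mp huv with h | h
    · simpa only [iterate_eq_iterate_succ_of_sub_val_eq_one h] using (hadj v).symm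
    · simpa only [iterate_eq_iterate_succ_of_sub_val_eq_one h] using hadj u
  · exact Fin.ext (iterate_injOn_Iio_minimalPeriod u.isLt v.isLt huv)

theorem girth_le_minimalPeriod (h : 2 < minimalPeriod f x)
    (hadj : ∀ n, G.Adj (f^[n] x) (f^[n + 1] x)) : G.girth ≤ minimalPeriod f x := by
  obtain ⟨_, w, hw, hlen⟩ :=
    (cycleGraph_isContained_iff h).mp (cycleGraph_minimalPeriod_isContained hadj)
  exact hlen ▸ girth_le_length hw

end SimpleGraph

open Function in
theorem Equiv.Perm.minimalPeriod_le_card_support {α : Type*} [Fintype α] [DecidableEq α]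
    {σ : Perm α} {x : α} (hx : σ x ≠ x) : minimalPeriod σ x ≤ σ.support.card := by
  simpa using Finset.card_le_card_of_injOn (s := Finset.range (minimalPeriod σ x))
    (fun n => σ^[n] x) (fun n _ => by simpa [iterate_eq_pow] using hx)
    (fun m hm n hn => iterate_injOn_Iio_minimalPeriod (by simpa using hm) (by simpa using hn))

theorem adj_of_sub_map_C_apply_ne_zero {V : Type*} [DecidableEq V] {η : ℝ}
    {A : V → V → Prop} [DecidableRel A] {G : SimpleGraph V}
    (hG : ∀ x y, G.Adj x y ↔ (x ≠ y ∧ (A x y ∨ A y x)))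
    {H : Matrix V V ℂ}
    (hH : ∀ x y, H x y =
      if A x y ∧ A y x then 1
      else if A x y then Complex.exp (η * Complex.I)
      else if A y x then Complex.exp (-(η : ℂ) * Complex.I)
      else 0)
    {x y : V} (hxy : x ≠ y)
    (h : ((X : ℂ[X]) • (1 : Matrix V V ℂ[X]) - H.map C) x y ≠ 0) : G.Adj x y := by
  refine (hG x y).mpr ⟨hxy, ?_⟩
  by_contra! hA
  exact h (by simp [Matrix.one_apply_ne hxy, hH, hA.1, hA.2])

theorem stmt_6_general {V : Type} [Fintype V] [DecidableEq V] (η : ℝ)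
    (A : V → V → Prop) [DecidableRel A]
    (G : SimpleGraph V)
    (hG : ∀ x y, G.Adj x y ↔ (x ≠ y ∧ (A x y ∨ A y x)))
    (H : Matrix V V ℂ)
    (hH : ∀ x y, H x y =
      if A x y ∧ A y x then 1
      else if A x y then Complex.exp (η * Complex.I)
      else if A y x then Complex.exp (-(η : ℂ) * Complex.I)
      else 0)
    (s : ℕ) (hgirth : G.girth = (s + 1 : ℕ))
    (X : Matrix V V (Polynomial ℂ))
    (hX : X = (Polynomial.X : Polynomial ℂ) • (1 : Matrix V V (Polynomial ℂ)) - H.map Polynomial.C)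
    (l : ℕ) (hls : l ≤ s)
    (σ : Equiv.Perm V)
    (hmove : (Finset.univ.filter (fun x => σ x ≠ x)).card = l)
    (hprod : ∏ x : V, X x (σ x) ≠ 0) :
    ∀ x : V, σ (σ x) = x := by
  intro x
  by_contra hx2
  have hx1 : σ x ≠ x := fun h => hx2 (by rw [h, h])
  have hadj : ∀ y, σ y ≠ y → G.Adj y (σ y) := fun y hy =>
    adj_of_sub_map_C_apply_ne_zero hG hH (Ne.symm hy)
      (hX ▸ Finset.prod_ne_zero_iff.mp hprod y (Finset.mem_univ y))
  have hadj_orbit : ∀ n, G.Adj (σ^[n] x) (σ^[n + 1] x) := by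
    intro n
    rw [Function.iterate_succ_apply', σ.iterate_eq_pow]
    exact hadj _ ((σ.apply_pow_apply_eq_iff n).not.mpr hx1)
  have hgirth_le := G.girth_le_minimalPeriod
    (Function.two_lt_minimalPeriod (σ.injective.mem_periodicPts x) hx2) hadj_orbit
  have hperiod_le := σ.minimalPeriod_le_card_support hx1
  change σ.support.card = l at hmove
  omega

/-- If `G` is a mixed graph with girth `s+1` and `X = λI - H_η(G)` (over `ℂ[λ]`),
then every permutation `σ` moving exactly `l ≤ s` vertices with
`∏_x X_{x,σ(x)} ≠ 0` is a product of disjoint transpositions, i.e. `σ² = id`. -/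
theorem stmt_6 {V : Type} [Fintype V] [DecidableEq V] (η : ℝ)
    (A : V → V → Prop) [DecidableRel A] (hirr : ∀ x, ¬ A x x)
    (G : SimpleGraph V)
    (hG : ∀ x y, G.Adj x y ↔ (x ≠ y ∧ (A x y ∨ A y x)))
    (H : Matrix V V ℂ)
    (hH : ∀ x y, H x y =
      if A x y ∧ A y x then 1
      else if A x y then Complex.exp (η * Complex.I)
      else if A y x then Complex.exp (-(η : ℂ) * Complex.I)
      else 0)
    (s : ℕ) (hgirth : G.girth = (s + 1 : ℕ))
    (X : Matrix V V (Polynomial ℂ))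
    (hX : X = (Polynomial.X : Polynomial ℂ) • (1 : Matrix V V (Polynomial ℂ)) - H.map Polynomial.C)
    (l : ℕ) (hl1 : 1 ≤ l) (hls : l ≤ s)
    (σ : Equiv.Perm V)
    (hmove : (Finset.univ.filter (fun x => σ x ≠ x)).card = l)
    (hprod : ∏ x : V, X x (σ x) ≠ 0) :
    ∀ x : V, σ (σ x) = x :=
  stmt_6_general η A G hG H hH s hgirth X hX l hls σ hmove hprod
end

section
/- In the quantum walk on a mixed graph with time evolution U_θ, if an arc a has terminus of degree 2, then U_θ e_a = e^{-iθ(b)} e_b, where b is the unique arc with origin t(a) other than a^{-1}. -/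
open Matrix Complex

/-- If the terminus of an arc `a` has degree 2, then the quantum walk passes
through: `U_θ e_a = e^{-iθ(b)} e_b`, where `b` is the unique arc with origin
`t(a)` other than `a⁻¹`. -/
theorem stmt_15 {V A : Type} [Fintype V] [DecidableEq V] [Fintype A] [DecidableEq A]
    (o t : A → V) (inv : A → A)
    (hinv : ∀ a, inv (inv a) = a) (hne : ∀ a, inv a ≠ a)
    (ho : ∀ a, o (inv a) = t a)
    (θ : A → ℝ) (hθ : ∀ a, θ (inv a) = - θ a)
    (deg : V → ℕ)
    (hdeg : ∀ x, deg x = (Finset.univ.filter (fun a : A => t a = x)).card)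
    (K : Matrix V A ℂ)
    (hK : ∀ x a, K x a = if x = t a then ((Real.sqrt (deg x) : ℂ))⁻¹ else 0)
    (C : Matrix A A ℂ) (hC : C = 2 • (Kᴴ * K) - 1)
    (S : Matrix A A ℂ)
    (hS : ∀ a b, S a b = if a = inv b then Complex.exp ((θ b : ℂ) * Complex.I) else 0)
    (U : Matrix A A ℂ) (hU : U = S * C)
    (a b : A) (ha : deg (t a) = 2) (hb : o b = t a) (hba : b ≠ inv a) :
    U.mulVec (Pi.single a 1) =
      Complex.exp (-(θ b : ℂ) * Complex.I) • (Pi.single b 1 : A → ℂ) := by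
  have hainvb : a ≠ inv b := by
    intro h; apply hba; rw [h, hinv]
  have hinvba : inv b ≠ a := fun h => hainvb h.symm
  have htinvb : t (inv b) = t a := by
    have h := ho (inv b); rw [hinv] at h; rw [← h, hb]
  have hset : Finset.univ.filter (fun c : A => t c = t a) = {a, inv b} := by
    symm
    apply Finset.eq_of_subset_of_card_le
    · intro x hx
      simp only [Finset.mem_insert, Finset.mem_singleton] at hx
      rcases hx with h | h <;> subst h <;>
        simp [Finset.mem_filter, htinvb]
    · rw [← hdeg, ha, Finset.card_pair hainvb]
  have hKK : ∀ e : A, (Kᴴ * K) e a = if t e = t a then (1/2 : ℂ) else 0 := by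
    intro e
    simp only [Matrix.mul_apply, conjTranspose_apply, hK]
    by_cases h : t e = t a
    · rw [if_pos h, h]
      rw [Finset.sum_eq_single (t a)]
      · simp only [if_pos rfl, ha, if_true]
        rw [star_inv₀, Complex.star_def, Complex.conj_ofReal, ← mul_inv,
          ← Complex.ofReal_mul, Real.mul_self_sqrt (by norm_num)]
        norm_num
      · intro x _ hx; rw [if_neg hx, mul_zero]
      · simp
    · rw [if_neg h]
      apply Finset.sum_eq_zero; intro x _
      by_cases hx : x = t e
      · have hxa : x ≠ t a := fun hh => h (hx ▸ hh)
        rw [if_neg hxa, mul_zero]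
      · rw [if_neg hx, star_zero, zero_mul]
  have hCa : ∀ e : A, C e a
      = (if t e = t a then 1 else 0) - (if e = a then 1 else 0) := by
    intro e
    rw [hC]
    simp only [Matrix.sub_apply, Matrix.smul_apply, Matrix.one_apply, hKK e]
    split_ifs <;> norm_num
  funext c
  have hmv : U.mulVec (Pi.single a 1) c = U c a := by
    simp [mulVec, dotProduct, Pi.single_apply]
  rw [hmv, hU, Matrix.mul_apply]
  rw [Finset.sum_eq_single (inv c)]
  · rw [hS, if_pos (hinv c).symm, hCa]
    by_cases hcb : c = b
    · subst hcb
      rw [if_pos htinvb, if_neg hinvba, hθ]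
      rw [Pi.smul_apply]
      simp only [Pi.single_eq_same, smul_eq_mul, mul_one]
      push_cast
      ring_nf
    · have hPs : (Pi.single b 1 : A → ℂ) c = 0 := by simp [Pi.single_eq_of_ne hcb]
      rw [Pi.smul_apply, hPs, smul_zero]
      by_cases hca : inv c = a
      · rw [if_pos (by rw [hca]), if_pos hca]; ring
      · have hnt : t (inv c) ≠ t a := by
          intro hh
          have : inv c ∈ Finset.univ.filter (fun c : A => t c = t a) := by
            simp [Finset.mem_filter, hh]
          rw [hset] at this
          simp only [Finset.mem_insert, Finset.mem_singleton] at this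
          rcases this with h | h
          · exact hca h
          · apply hcb; rw [← hinv c, h, hinv]
        rw [if_neg hnt, if_neg hca]; ring
  · intro e _ he
    rw [hS, if_neg, zero_mul]
    intro h; exact he (by rw [h, hinv])
  · simp
end

section
/- The Grover walk (θ ≡ 0, or any η-function) on the undirected path P_n on n ≥ 2 vertices is periodic with period exactly 2(n-1): U^{2(n-1)} = I, and U^τ ≠ I for 1 ≤ τ < 2(n-1). -/
open Matrix

/-- Arcs of the path `P_n`: `(k, true)` goes from vertex `k` to `k+1`,
`(k, false)` is its inverse. -/
def pathT (n : ℕ) (a : Fin (n - 1) × Bool) : Fin n :=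
  if a.2 then ⟨a.1.val + 1, by have := a.1.isLt; omega⟩
  else ⟨a.1.val, by have := a.1.isLt; omega⟩

def pathInv (n : ℕ) (a : Fin (n - 1) × Bool) : Fin (n - 1) × Bool := (a.1, !a.2)

def pathDeg (n : ℕ) (x : Fin n) : ℕ :=
  (Finset.univ.filter (fun a : Fin (n - 1) × Bool => pathT n a = x)).card

noncomputable def pathK (n : ℕ) : Matrix (Fin n) (Fin (n - 1) × Bool) ℂ :=
  fun x a => if x = pathT n a then ((Real.sqrt (pathDeg n x) : ℂ))⁻¹ else 0

noncomputable def pathC (n : ℕ) :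
    Matrix (Fin (n - 1) × Bool) (Fin (n - 1) × Bool) ℂ :=
  2 • ((pathK n)ᴴ * pathK n) - 1

/-- The shift operator of `P_n`; the η-function vanishes on all (bidirectional)
arcs, so all phases are `1` (the Grover walk, for any `η`). -/
def pathS (n : ℕ) : Matrix (Fin (n - 1) × Bool) (Fin (n - 1) × Bool) ℂ :=
  fun a b => if a = pathInv n b then 1 else 0

noncomputable def pathU (n : ℕ) :
    Matrix (Fin (n - 1) × Bool) (Fin (n - 1) × Bool) ℂ :=
  pathS n * pathC n

lemma pathDeg_eq (n : ℕ) (hn : 2 ≤ n) (x : Fin n) :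
    pathDeg n x = if x.val = 0 ∨ x.val = n - 1 then 1 else 2 := by
  obtain ⟨j, hj⟩ := x
  unfold pathDeg
  split_ifs with h
  · rcases h with h | h
    · subst h
      have : (Finset.univ.filter (fun a : Fin (n - 1) × Bool => pathT n a = ⟨0, hj⟩))
          = {(⟨0, by omega⟩, false)} := by
        ext ⟨⟨k, hk⟩, s⟩
        simp [pathT, Fin.ext_iff, Prod.ext_iff]
        cases s <;> simp <;> omega
      rw [this]; simp
    · subst h
      have : (Finset.univ.filter (fun a : Fin (n - 1) × Bool => pathT n a = ⟨n-1, hj⟩))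
          = {(⟨n-2, by omega⟩, true)} := by
        ext ⟨⟨k, hk⟩, s⟩
        simp [pathT, Fin.ext_iff, Prod.ext_iff]
        cases s <;> simp <;> omega
      rw [this]; simp
  · push_neg at h
    have h1 : j ≠ 0 := h.1
    have h2 : j ≠ n - 1 := h.2
    have : (Finset.univ.filter (fun a : Fin (n - 1) × Bool => pathT n a = ⟨j, hj⟩))
        = {(⟨j-1, by omega⟩, true), (⟨j, by omega⟩, false)} := by
      ext ⟨⟨k, hk⟩, s⟩
      simp [pathT, Fin.ext_iff, Prod.ext_iff]
      cases s <;> simp <;> omega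
    rw [this]
    rw [Finset.card_insert_of_notMem (by simp), Finset.card_singleton]

lemma KhK (n : ℕ) (hn : 2 ≤ n) (c b : Fin (n-1) × Bool) :
    ((pathK n)ᴴ * pathK n) c b
      = if pathT n c = pathT n b then ((pathDeg n (pathT n c) : ℝ) : ℂ)⁻¹ else 0 := by
  have hd : (0:ℝ) < (pathDeg n (pathT n c) : ℝ) := by
    rw [pathDeg_eq n hn]; split_ifs <;> norm_num
  rw [Matrix.mul_apply]
  rw [Finset.sum_eq_single (pathT n c)]
  · simp only [conjTranspose_apply, pathK]
    rw [if_pos trivial]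
    split_ifs with h
    · rw [← Complex.ofReal_inv, Complex.star_def, Complex.conj_ofReal]
      rw [← Complex.ofReal_mul, ← Complex.ofReal_inv]
      congr 1
      rw [← mul_inv, Real.mul_self_sqrt hd.le]
    · rw [mul_zero]
  · intro x _ hx
    simp only [conjTranspose_apply, pathK, if_neg hx, star_zero, zero_mul]
  · simp

lemma pathC_apply (n : ℕ) (hn : 2 ≤ n) (c b : Fin (n-1) × Bool) :
    pathC n c b
      = (if pathT n c = pathT n b then 2 * ((pathDeg n (pathT n c) : ℝ) : ℂ)⁻¹ else 0)
        - (if c = b then 1 else 0) := by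
  simp only [pathC, Matrix.sub_apply, Matrix.smul_apply, Matrix.one_apply, KhK n hn]
  split_ifs <;> simp [two_smul, two_mul]

lemma pathU_apply (n : ℕ) (a b : Fin (n-1) × Bool) :
    pathU n a b = pathC n (pathInv n a) b := by
  rw [pathU, Matrix.mul_apply]
  rw [Finset.sum_eq_single (pathInv n a)]
  · rw [pathS]
    simp [pathInv]
  · intro c _ hc
    rw [pathS]
    rw [if_neg, zero_mul]
    intro h
    apply hc
    rw [h, pathInv, pathInv]
    simp
  · simp

def pathSigma (n : ℕ) (a : Fin (n - 1) × Bool) : Fin (n - 1) × Bool :=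
  if a.2 then
    (if a.1.val = 0 then (a.1, false)
     else (⟨a.1.val - 1, by have := a.1.isLt; omega⟩, true))
  else
    (if h : a.1.val = n - 2 then (a.1, true)
     else (⟨a.1.val + 1, by have := a.1.isLt; omega⟩, false))

lemma pathU_eq_sigma (n : ℕ) (hn : 2 ≤ n) (a b : Fin (n-1) × Bool) :
    pathU n a b = if b = pathSigma n a then 1 else 0 := by
  rw [pathU_apply, pathC_apply n hn]
  obtain ⟨⟨k, hk⟩, s⟩ := a
  obtain ⟨⟨l, hl⟩, t⟩ := b
  rw [pathDeg_eq n hn]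
  cases s <;> cases t <;>
    simp only [pathInv, pathSigma, pathT, Bool.not_true, Bool.not_false,
      Prod.mk.injEq, Fin.mk.injEq, Fin.val_mk, if_true, if_false,
      Bool.true_eq_false, Bool.false_eq_true, and_true, and_false] <;>
    split_ifs <;>
    (try simp only [Prod.mk.injEq, Fin.mk.injEq, Bool.true_eq_false, Bool.false_eq_true,
        and_true, and_false, not_and, false_or, not_or, not_false_eq_true,
        not_true_eq_false, iff_false, iff_true] at *) <;>
    first
      | (norm_num; done)
      | omega
      | (exfalso; omega)
      | norm_num
      | rfl

def pathE (n : ℕ) (a : Fin (n - 1) × Bool) : ZMod (2 * (n - 1)) :=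
  ((if a.2 then a.1.val else 2 * (n - 1) - 1 - a.1.val : ℕ) : ZMod (2 * (n - 1)))

lemma pathE_inj (n : ℕ) (hn : 2 ≤ n) : Function.Injective (pathE n) := by
  haveI : NeZero (2 * (n - 1)) := ⟨by omega⟩
  intro a b hab
  obtain ⟨⟨k, hk⟩, s⟩ := a
  obtain ⟨⟨l, hl⟩, t⟩ := b
  unfold pathE at hab
  have hval : (if s then k else 2 * (n-1) - 1 - k) = (if t then l else 2 * (n-1) - 1 - l) := by
    have h1 : (if s then k else 2 * (n-1) - 1 - k) < 2 * (n - 1) := by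
      split_ifs <;> omega
    have h2 : (if t then l else 2 * (n-1) - 1 - l) < 2 * (n - 1) := by
      split_ifs <;> omega
    have := congrArg ZMod.val hab
    rwa [ZMod.val_cast_of_lt h1, ZMod.val_cast_of_lt h2] at this
  cases s <;> cases t <;> simp only [Bool.false_eq_true, Bool.true_eq_false,
      if_true, if_false] at hval <;>
    simp only [Prod.mk.injEq, Fin.mk.injEq, Bool.false_eq_true, Bool.true_eq_false,
      and_true, and_false] <;> omega

lemma pathE_true (n : ℕ) (k : Fin (n-1)) : pathE n (k, true) = (k.val : ZMod (2*(n-1))) := rfl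

lemma pathE_false (n : ℕ) (k : Fin (n-1)) :
    pathE n (k, false) = ((2*(n-1) - 1 - k.val : ℕ) : ZMod (2*(n-1))) := rfl

lemma pathE_sigma (n : ℕ) (hn : 2 ≤ n) (a : Fin (n - 1) × Bool) :
    pathE n (pathSigma n a) = pathE n a - 1 := by
  have hone : (1 : ZMod (2*(n-1))) = ((1:ℕ) : ZMod (2*(n-1))) := by norm_num
  have key : ∀ x y : ℕ, (x + 1 = y ∨ (x + 1 = 2*(n-1) ∧ y = 0)) →
      ((x : ZMod (2*(n-1))) = (y : ZMod (2*(n-1))) - 1) := by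
    intro x y hxy
    rw [eq_sub_iff_add_eq, hone, ← Nat.cast_add]
    rcases hxy with h | ⟨h1, h2⟩
    · rw [h]
    · rw [h1, h2, ZMod.natCast_self, Nat.cast_zero]
  obtain ⟨⟨k, hk⟩, s⟩ := a
  cases s
  · by_cases h : k = n - 2
    · have hs : pathSigma n ((⟨k,hk⟩ : Fin (n-1)), false) = ((⟨k,hk⟩ : Fin (n-1)), true) := by
        simp [pathSigma, h]
      rw [hs, pathE_true, pathE_false]
      apply key
      left; dsimp only; omega
    · have hs : pathSigma n ((⟨k,hk⟩ : Fin (n-1)), false)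
          = ((⟨k+1, by omega⟩ : Fin (n-1)), false) := by
        simp [pathSigma, h]
      rw [hs, pathE_false, pathE_false]
      apply key
      left; dsimp only; omega
  · by_cases h : k = 0
    · have hs : pathSigma n ((⟨k,hk⟩ : Fin (n-1)), true) = ((⟨k,hk⟩ : Fin (n-1)), false) := by
        simp [pathSigma, h]
      rw [hs, pathE_false, pathE_true]
      apply key
      right; dsimp only; constructor <;> omega
    · have hs : pathSigma n ((⟨k,hk⟩ : Fin (n-1)), true)
          = ((⟨k-1, by omega⟩ : Fin (n-1)), true) := by
        simp [pathSigma, h]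
      rw [hs, pathE_true, pathE_true]
      apply key
      left; dsimp only; omega

def pathQ (N : ℕ) [NeZero N] : Matrix (ZMod N) (ZMod N) ℂ :=
  fun x y => if x = y + 1 then 1 else 0

lemma pathQ_pow (N : ℕ) [NeZero N] (p : ℕ) (x y : ZMod N) :
    (pathQ N ^ p) x y = if x = y + (p : ZMod N) then 1 else 0 := by
  induction p generalizing x y with
  | zero => simp [Matrix.one_apply]
  | succ p ih =>
    rw [pow_succ, Matrix.mul_apply]
    have : ∀ c : ZMod N, (pathQ N ^ p) x c * pathQ N c y
        = if c = y + 1 then (if x = y + 1 + (p : ZMod N) then 1 else 0) else 0 := by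
      intro c
      rw [ih, pathQ]
      split_ifs <;> simp_all
    simp only [this]
    rw [Finset.sum_ite_eq' Finset.univ (y+1)
      (fun _ => if x = y + 1 + (p : ZMod N) then (1:ℂ) else 0)]
    simp only [Finset.mem_univ, if_true]
    have : y + 1 + (p : ZMod N) = y + ((p+1 : ℕ) : ZMod N) := by
      push_cast; ring
    rw [this]


/-- The quantum walk on the undirected path `P_n` (`n ≥ 2`) is periodic with
period exactly `2(n-1)`. -/
theorem stmt_16 (n : ℕ) (hn : 2 ≤ n) :
    pathU n ^ (2 * (n - 1)) = 1 ∧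
    ∀ τ : ℕ, 1 ≤ τ → τ < 2 * (n - 1) → pathU n ^ τ ≠ 1 := by
  haveI : NeZero (2 * (n - 1)) := ⟨by omega⟩
  have hbij : Function.Bijective (pathE n) := by
    rw [Fintype.bijective_iff_injective_and_card]
    refine ⟨pathE_inj n hn, ?_⟩
    rw [ZMod.card]
    simp only [Fintype.card_prod, Fintype.card_fin, Fintype.card_bool]
    ring
  let E : (Fin (n-1) × Bool) ≃ ZMod (2*(n-1)) := Equiv.ofBijective _ hbij
  have hE : ∀ a, E a = pathE n a := fun _ => rfl
  have hU : pathU n = (pathQ (2*(n-1))).submatrix E E := by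
    ext a b
    rw [Matrix.submatrix_apply, pathU_eq_sigma n hn, pathQ]
    have hiff : (b = pathSigma n a) ↔ (E a = E b + 1) := by
      rw [hE, hE, ← (pathE_inj n hn).eq_iff (a := b), pathE_sigma n hn,
        eq_sub_iff_add_eq, eq_comm]
    simp only [hiff]
  have key : ∀ p, pathU n ^ p = (pathQ (2*(n-1)) ^ p).submatrix E E := by
    intro p
    induction p with
    | zero => rw [pow_zero, pow_zero, Matrix.submatrix_one_equiv]
    | succ p ih => rw [pow_succ, pow_succ, ih, hU, Matrix.submatrix_mul_equiv]
  constructor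
  · rw [key]
    have hq1 : pathQ (2*(n-1)) ^ (2*(n-1)) = 1 := by
      ext x y
      rw [pathQ_pow, Matrix.one_apply, ZMod.natCast_self, add_zero]
    rw [hq1, Matrix.submatrix_one_equiv]
  · intro τ h1 h2 hcon
    set a0 : Fin (n-1) × Bool := (⟨0, by omega⟩, true) with ha0
    have h0 : (pathU n ^ τ) a0 a0 = 1 := by rw [hcon, Matrix.one_apply_eq]
    rw [key, Matrix.submatrix_apply, pathQ_pow] at h0
    have hne : ¬ (E a0 = E a0 + (τ : ZMod (2*(n-1)))) := by
      intro hq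
      have hz : ((τ : ℕ) : ZMod (2*(n-1))) = 0 := (left_eq_add.mp hq)
      rw [ZMod.natCast_eq_zero_iff] at hz
      have := Nat.le_of_dvd (by omega) hz
      omega
    rw [if_neg hne] at h0
    exact zero_ne_one h0
end

section
/- Let U_θ be the time evolution matrix of the quantum walk on the mixed cycle C_n^j equipped with the η-function θ. Then for every arc a of C_n^j, U_θ^n e_a = e^{εjη i} e_a where ε ∈ {+1,-1} depends only on the orientation class of a (arcs traversing the cycle in one direction pick up e^{ijη}, in the other e^{-ijη}). Consequently, if η ∉ ℚπ and j ≥ 1 then U_θ^m ≠ I for all m ≥ 1, while if η = (p/q)π then U_θ^{2qn} = I. -/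
open Matrix

/-- Arcs of the mixed cycle `C_n^j`: `(k, true)` goes from vertex `k` to
`k+1 (mod n)` (directed, with phase `η`, iff `k < j`); `(k, false)` is its
inverse. -/
def cycT (n : ℕ) (a : Fin n × Bool) : Fin n :=
  if a.2 then ⟨(a.1.val + 1) % n, Nat.mod_lt _ (by have := a.1.isLt; omega)⟩
  else a.1

def cycInv (n : ℕ) (a : Fin n × Bool) : Fin n × Bool := (a.1, !a.2)

/-- The η-function of `C_n^j`: `η` on forward directed arcs, `-η` on their
inverses, `0` on bidirectional arcs. -/
def cycTheta (n j : ℕ) (η : ℝ) (a : Fin n × Bool) : ℝ :=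
  if a.1.val < j then (if a.2 then η else -η) else 0

/-- Boundary operator (the cycle is 2-regular, so all degrees are 2). -/
noncomputable def cycK (n : ℕ) : Matrix (Fin n) (Fin n × Bool) ℂ :=
  fun x a => if x = cycT n a then ((Real.sqrt 2 : ℂ))⁻¹ else 0

noncomputable def cycC (n : ℕ) : Matrix (Fin n × Bool) (Fin n × Bool) ℂ :=
  2 • ((cycK n)ᴴ * cycK n) - 1

noncomputable def cycS (n j : ℕ) (η : ℝ) :
    Matrix (Fin n × Bool) (Fin n × Bool) ℂ :=
  fun a b => if a = cycInv n b then Complex.exp ((cycTheta n j η b : ℂ) * Complex.I)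
    else 0

noncomputable def cycU (n j : ℕ) (η : ℝ) :
    Matrix (Fin n × Bool) (Fin n × Bool) ℂ :=
  cycS n j η * cycC n

/-! The coin `C` sends an arc to the other arc with the same head, and the shift `S` reverses
that arc, multiplying by `e^{iθ}`. So `U_θ` moves `e_a` one step along the cycle in the direction
of `a`, and after `n` steps `e_a` has come back to itself, having collected `θ` of every arc of
the opposite orientation class, i.e. `e^{±ijη}`. Thus `U_θ^n` is diagonal with these eigenvalues:
`U_θ^m = 1` forces `e^{ijηm} = 1`, so `η ∈ ℚπ`, while `η = (p/q)π` gives `U_θ^{2qn} = 1`. -/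

namespace Matrix

variable {ι : Type*} [Fintype ι] [DecidableEq ι] {R : Type*} [CommSemiring R]

theorem pow_mulVec_of_mulVec_eq_smul {M : Matrix ι ι R} {v : ι → R} {c : R}
    (h : M *ᵥ v = c • v) (m : ℕ) : (M ^ m) *ᵥ v = c ^ m • v := by
  induction m with
  | zero => simp
  | succ m ih => rw [pow_succ, ← mulVec_mulVec, h, mulVec_smul, ih, smul_smul, ← pow_succ']

theorem pow_mul_eq_one_of_pow_mulVec_single {M : Matrix ι ι R} {n k : ℕ} {c : ι → R}
    (h : ∀ a, (M ^ n) *ᵥ Pi.single a 1 = c a • Pi.single a 1) (hc : ∀ a, c a ^ k = 1) :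
    M ^ (n * k) = 1 :=
  ext_of_mulVec_single fun a => by
    rw [pow_mul, pow_mulVec_of_mulVec_eq_smul (h a), hc, one_smul, one_mulVec]

theorem pow_eq_one_of_pow_mulVec_single {M : Matrix ι ι R} {n m : ℕ} {a : ι} {c : R}
    (h : (M ^ n) *ᵥ Pi.single a 1 = c • Pi.single a 1) (hM : M ^ m = 1) : c ^ m = 1 := by
  have := pow_mulVec_of_mulVec_eq_smul h m
  rw [← pow_mul, mul_comm, pow_mul, hM, one_pow, one_mulVec] at this
  simpa using (congrFun this a).symm

end Matrix

namespace Complex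

open Real

theorem exists_rat_mul_pi_of_exp_mul_I_pow_eq_one {x : ℝ} {m : ℕ} (hm : m ≠ 0)
    (h : exp (x * I) ^ m = 1) : ∃ r : ℚ, x = r * π := by
  rw [← exp_nat_mul, exp_eq_one_iff] at h
  obtain ⟨z, hz⟩ := h
  have hx : (m : ℝ) * x = z * (2 * π) := by
    apply_fun im at hz
    simpa using hz
  refine ⟨2 * z / m, ?_⟩
  push_cast
  field_simp
  linear_combination hx

theorem exp_mul_I_pow_two_mul_eq_one {x : ℝ} {q : ℕ} {k : ℤ} (h : q * x = k * π) :
    exp (x * I) ^ (2 * q) = 1 := by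
  rw [← exp_nat_mul, ← exp_int_mul_two_pi_mul_I k]
  congr 1
  push_cast
  have h' : (q : ℂ) * x = k * π := by exact_mod_cast h
  linear_combination (2 * I) * h'

end Complex

section MixedCycle

variable {n : ℕ}

@[simp]
theorem cycInv_cycInv (a : Fin n × Bool) : cycInv n (cycInv n a) = a := by
  simp [cycInv]

theorem cycTheta_cycInv (j : ℕ) (η : ℝ) (a : Fin n × Bool) :
    cycTheta n j η (cycInv n a) = -cycTheta n j η a := by
  obtain ⟨k, _ | _⟩ := a <;> simp [cycTheta, cycInv] <;> split_ifs <;> simp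

theorem cycK_conjTranspose_mul_apply (b a : Fin n × Bool) :
    ((cycK n)ᴴ * cycK n) b a = if cycT n b = cycT n a then (2 : ℂ)⁻¹ else 0 := by
  have hsqrt : ((Real.sqrt 2 : ℂ))⁻¹ * ((Real.sqrt 2 : ℂ))⁻¹ = (2 : ℂ)⁻¹ := by
    rw [← mul_inv, ← Complex.ofReal_mul, Real.mul_self_sqrt zero_le_two, Complex.ofReal_ofNat]
  rw [mul_apply, Finset.sum_eq_single (cycT n b) (fun x _ hx => by simp [cycK, hx]) (by simp)]
  split_ifs with h <;> simp [cycK, h, hsqrt]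

theorem cycS_mulVec_single (j : ℕ) (η : ℝ) (b : Fin n × Bool) :
    cycS n j η *ᵥ Pi.single b 1 =
      Complex.exp (cycTheta n j η b * Complex.I) • Pi.single (cycInv n b) 1 := by
  ext a
  simp [cycS, Pi.single_apply]

theorem sum_cycTheta {j : ℕ} (hj : j ≤ n) (η : ℝ) (b : Bool) :
    ∑ c : Fin n, cycTheta n j η (c, b) = j * (if b then η else -η) := by
  simp only [cycTheta]
  rw [Fin.sum_univ_eq_sum_range (fun i => if i < j then (if b then η else -η) else 0),
    ← Finset.sum_filter, show (Finset.range n).filter (· < j) = Finset.range j by ext; simp; omega,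
    Finset.sum_const, Finset.card_range, nsmul_eq_mul]

variable [NeZero n]

open Fin.CommRing

def cycNext (n : ℕ) [NeZero n] (a : Fin n × Bool) : Fin n × Bool :=
  if a.2 then (a.1 + 1, true) else (a.1 - 1, false)

@[simp]
theorem cycNext_snd (a : Fin n × Bool) : (cycNext n a).2 = a.2 := by
  unfold cycNext; split_ifs with h <;> simp [h]

theorem cycT_eq_ite (a : Fin n × Bool) : cycT n a = if a.2 then a.1 + 1 else a.1 := by
  obtain ⟨k, _ | _⟩ := a
  · rfl
  · ext; simp [cycT, Fin.val_add]

theorem cycT_eq_cycT_iff (b a : Fin n × Bool) :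
    cycT n b = cycT n a ↔ b = a ∨ b = cycInv n (cycNext n a) := by
  obtain ⟨l, _ | _⟩ := b <;> obtain ⟨k, _ | _⟩ := a <;>
    simp [cycT_eq_ite, cycInv, cycNext, eq_sub_iff_add_eq, eq_comm]

theorem cycInv_cycNext_ne (a : Fin n × Bool) : cycInv n (cycNext n a) ≠ a :=
  fun h => by simpa [cycInv] using congrArg Prod.snd h

theorem cycC_apply (b a : Fin n × Bool) :
    cycC n b a = if b = cycInv n (cycNext n a) then 1 else 0 := by
  rw [cycC, Matrix.sub_apply, Matrix.smul_apply, cycK_conjTranspose_mul_apply, one_apply]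
  simp_rw [cycT_eq_cycT_iff]
  by_cases hb : b = cycInv n (cycNext n a)
  · norm_num [hb, cycInv_cycNext_ne]
  · by_cases hba : b = a <;> norm_num [hb, hba, (cycInv_cycNext_ne a).symm]

theorem cycC_mulVec_single (a : Fin n × Bool) :
    cycC n *ᵥ Pi.single a 1 = Pi.single (cycInv n (cycNext n a)) 1 := by
  ext b
  rw [mulVec_single_one, col_apply, cycC_apply, Pi.single_apply]

theorem cycU_mulVec_single (j : ℕ) (η : ℝ) (a : Fin n × Bool) :
    cycU n j η *ᵥ Pi.single a 1 =
      Complex.exp (cycTheta n j η (cycInv n (cycNext n a)) * Complex.I) •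
        Pi.single (cycNext n a) 1 := by
  rw [cycU, ← mulVec_mulVec, cycC_mulVec_single, cycS_mulVec_single, cycInv_cycInv]

theorem cycNext_iterate (k : Fin n) (b : Bool) (m : ℕ) :
    (cycNext n)^[m] (k, b) = (if b then k + (m : Fin n) else k - (m : Fin n), b) := by
  induction m with
  | zero => simp
  | succ m ih =>
    rw [Function.iterate_succ_apply', ih]
    cases b <;> simp [cycNext, add_assoc, sub_sub]

theorem cycNext_iterate_self (a : Fin n × Bool) : (cycNext n)^[n] a = a := by
  obtain ⟨k, _ | _⟩ := a <;> simp [cycNext_iterate]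

theorem sum_range_cycNext_iterate {M : Type*} [AddCommMonoid M] (f : Fin n × Bool → M)
    (a : Fin n × Bool) :
    ∑ i ∈ Finset.range n, f ((cycNext n)^[i] a) = ∑ c : Fin n, f (c, a.2) := by
  obtain ⟨k, b⟩ := a
  simp_rw [cycNext_iterate]
  rw [← Fin.sum_univ_eq_sum_range (fun i => f (if b then k + i else k - i, b))]
  simp only [Fin.cast_val_eq_self]
  cases b
  · exact Equiv.sum_comp (Equiv.subLeft k) (fun c => f (c, false))
  · exact Equiv.sum_comp (Equiv.addLeft k) (fun c => f (c, true))

theorem cycU_pow_mulVec_single (j : ℕ) (η : ℝ) (m : ℕ) (a : Fin n × Bool) :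
    (cycU n j η ^ m) *ᵥ Pi.single a 1 =
      Complex.exp ((∑ i ∈ Finset.range m,
          cycTheta n j η (cycInv n ((cycNext n)^[i + 1] a)) : ℝ) * Complex.I) •
        Pi.single ((cycNext n)^[m] a) 1 := by
  induction m generalizing a with
  | zero => rw [pow_zero, one_mulVec]; simp
  | succ m ih =>
    rw [pow_succ, ← mulVec_mulVec, cycU_mulVec_single, mulVec_smul, ih, smul_smul,
      ← Complex.exp_add, Finset.sum_range_succ' _ m]
    simp only [Function.iterate_succ_apply, Function.iterate_zero_apply]
    push_cast
    ring_nf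

theorem cycU_pow_self_mulVec_single {j : ℕ} (hj : j ≤ n) (η : ℝ) (a : Fin n × Bool) :
    (cycU n j η ^ n) *ᵥ Pi.single a 1 =
      Complex.exp (((if a.2 then (-1 : ℝ) else 1) * j * η : ℝ) * Complex.I) •
        Pi.single a 1 := by
  rw [cycU_pow_mulVec_single, cycNext_iterate_self]
  simp_rw [Function.iterate_succ_apply]
  rw [sum_range_cycNext_iterate (fun x => cycTheta n j η (cycInv n x)), cycNext_snd]
  simp_rw [cycTheta_cycInv, Finset.sum_neg_distrib, sum_cycTheta hj]
  split_ifs <;> ring_nf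

end MixedCycle

/-- On the mixed cycle `C_n^j`: `U_θ^n e_a = e^{±ijη} e_a` (sign depending only
on the orientation class of `a`); hence if `η ∉ ℚπ` and `j ≥ 1` the walk is not
periodic, while if `η = (p/q)π` then `U_θ^{2qn} = I`. -/
theorem stmt_19 (n j : ℕ) (hn : 3 ≤ n) (hj : j ≤ n) (η : ℝ) :
    (∀ a : Fin n × Bool, (cycU n j η ^ n).mulVec (Pi.single a 1) =
      Complex.exp (((if a.2 then (-1 : ℝ) else 1) * j * η : ℝ) * Complex.I) •
        (Pi.single a 1 : Fin n × Bool → ℂ)) ∧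
    ((∀ r : ℚ, η ≠ (r : ℝ) * Real.pi) → 1 ≤ j →
      ∀ m : ℕ, 1 ≤ m → cycU n j η ^ m ≠ 1) ∧
    (∀ p : ℤ, ∀ q : ℕ, 1 ≤ q → η = ((p : ℝ) / (q : ℝ)) * Real.pi →
      cycU n j η ^ (2 * q * n) = 1) := by
  have : NeZero n := ⟨by omega⟩
  have hPow := cycU_pow_self_mulVec_single (η := η) hj
  refine ⟨hPow, fun hη hj1 m hm hU => ?_, fun p q hq hη => ?_⟩
  · have hexp := Matrix.pow_eq_one_of_pow_mulVec_single (hPow (0, false)) hU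
    obtain ⟨r, hr⟩ := Complex.exists_rat_mul_pi_of_exp_mul_I_pow_eq_one (by omega) hexp
    simp only [Bool.false_eq_true, if_false, one_mul] at hr
    refine hη (r / j) ?_
    push_cast
    field_simp
    linear_combination hr
  · rw [show 2 * q * n = n * (2 * q) by ring]
    refine Matrix.pow_mul_eq_one_of_pow_mulVec_single hPow fun a =>
      Complex.exp_mul_I_pow_two_mul_eq_one (k := (if a.2 then -1 else 1) * j * p) ?_
    subst hη
    push_cast
    field_simp
end
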